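/- arXiv:2009.00844 — 2 statements merged into one kernel-verified Lean document; each statement's English description precedes it below -/
import Mathlib

section
/- Let K be an algebraically closed field and let M be a p × q matrix over K[x_1,...,x_n] (p ≤ q) with entries M[i][j] = c_{i,j}·m_j, where all p × p scalar minors C_{i_1,...,i_p} = det[c_{k,i_l}] are nonzero. Then a point α ∈ K^n cancels all p-minors of M if and only if there exist q − p + 1 distinct column indices i_1,...,i_{q−p+1} such that m_{i_1}(α) = ... = m_{i_{q−p+1}}(α) = 0. -/
open MvPolynomial

/-- For a `p × q` polynomial matrix with entries `c i j • m j` whose scalar `p`-minors are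
all nonzero, a point cancels all `p`-minors iff `q - p + 1` of the column polynomials
vanish at it. -/
theorem stmt1 {K : Type*} [Field K] [IsAlgClosed K]
    {n p q : ℕ} (hp : 0 < p) (hpq : p ≤ q)
    (c : Fin p → Fin q → K) (m : Fin q → MvPolynomial (Fin n) K)
    (M : Matrix (Fin p) (Fin q) (MvPolynomial (Fin n) K))
    (hM : ∀ i j, M i j = MvPolynomial.C (c i j) * m j)
    (hminors : ∀ φ : Fin p → Fin q, StrictMono φ →
      Matrix.det (Matrix.of fun k l => c k (φ l)) ≠ 0)
    (α : Fin n → K) :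
    (∀ φ : Fin p → Fin q, StrictMono φ →
        MvPolynomial.eval α (Matrix.det (Matrix.of fun i l => M i (φ l))) = 0) ↔
      ∃ ψ : Fin (q - p + 1) → Fin q, StrictMono ψ ∧
        ∀ k, MvPolynomial.eval α (m (ψ k)) = 0 := by
  classical
  -- Key computation: evaluation of each minor
  have key : ∀ φ : Fin p → Fin q, StrictMono φ →
      (MvPolynomial.eval α (Matrix.det (Matrix.of fun i l => M i (φ l))) = 0 ↔
        ∃ l, MvPolynomial.eval α (m (φ l)) = 0) := by
    intro φ hφ
    have h1 : MvPolynomial.eval α (Matrix.det (Matrix.of fun i l => M i (φ l))) =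
        Matrix.det (Matrix.of fun i l =>
          MvPolynomial.eval α (m (φ l)) * c i (φ l)) := by
      rw [RingHom.map_det]
      congr 1
      ext i l
      simp [Matrix.map, hM, mul_comm]
    rw [h1, Matrix.det_mul_row (fun l => MvPolynomial.eval α (m (φ l))) (fun i l => c i (φ l)), mul_eq_zero]
    constructor
    · rintro (h | h)
      · obtain ⟨l, -, hl⟩ := Finset.prod_eq_zero_iff.mp h
        exact ⟨l, hl⟩
      · exact absurd h (hminors φ hφ)
    · rintro ⟨l, hl⟩
      exact Or.inl (Finset.prod_eq_zero (Finset.mem_univ l) hl)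
  set Z : Finset (Fin q) := Finset.univ.filter (fun j => MvPolynomial.eval α (m j) = 0)
    with hZ
  have hcard : Z.card + Zᶜ.card = q := by
    simpa using Finset.card_add_card_compl Z
  constructor
  · intro h
    -- Z has at least q - p + 1 elements
    have hZcard : q - p + 1 ≤ Z.card := by
      by_contra hlt
      have hcompl : p ≤ Zᶜ.card := by omega
      obtain ⟨t, hts, htc⟩ := Finset.exists_subset_card_eq hcompl
      have hφ := (t.orderEmbOfFin htc).strictMono
      obtain ⟨l, hl⟩ := (key _ hφ).mp (h _ hφ)
      have hmem : t.orderEmbOfFin htc l ∈ Zᶜ := hts (t.orderEmbOfFin_mem htc l)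
      rw [Finset.mem_compl, hZ, Finset.mem_filter] at hmem
      exact hmem ⟨Finset.mem_univ _, hl⟩
    obtain ⟨u, hus, huc⟩ := Finset.exists_subset_card_eq hZcard
    refine ⟨u.orderEmbOfFin huc, (u.orderEmbOfFin huc).strictMono, fun k => ?_⟩
    have := hus (u.orderEmbOfFin_mem huc k)
    rw [hZ, Finset.mem_filter] at this
    exact this.2
  · rintro ⟨ψ, hψ, hz⟩ φ hφ
    rw [key φ hφ]
    -- ranges of φ and ψ must intersect
    set A := Finset.univ.image φ with hA
    set B := Finset.univ.image ψ with hB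
    have hAc : A.card = p := by
      rw [hA, Finset.card_image_of_injective _ hφ.injective, Finset.card_univ, Fintype.card_fin]
    have hBc : B.card = q - p + 1 := by
      rw [hB, Finset.card_image_of_injective _ hψ.injective, Finset.card_univ, Fintype.card_fin]
    have hun : (A ∪ B).card ≤ q := by
      simpa using Finset.card_le_card (Finset.subset_univ (A ∪ B))
    have hiu : (A ∩ B).card + (A ∪ B).card = A.card + B.card :=
      Finset.card_inter_add_card_union A B
    have hne : (A ∩ B).Nonempty := by
      rw [← Finset.card_pos]; omega
    obtain ⟨j, hj⟩ := hne
    rw [Finset.mem_inter, hA, hB] at hj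
    obtain ⟨hjA, hjB⟩ := hj
    obtain ⟨l, -, hl⟩ := Finset.mem_image.mp hjA
    obtain ⟨k, -, hk⟩ := Finset.mem_image.mp hjB
    exact ⟨l, by rw [hl, ← hk, hz]⟩
end

section
/- Let w_1,...,w_n be positive integers and let d ≥ 0 be an integer. Then the number of monomials x_1^{e_1}···x_n^{e_n} with weighted degree w_1 e_1 + ... + w_n e_n ≤ d is at most (d + w_1 + ... + w_n)^n / (n! · w_1···w_n). -/
open Finset

private def MF (n : ℕ) (w : Fin n → ℕ) (d : ℕ) : Finset (Fin n → ℕ) :=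
  (Fintype.piFinset fun _ => Finset.range (d + 1)).filter fun e => ∑ i, w i * e i ≤ d

private lemma set_eq_MF {n : ℕ} (w : Fin n → ℕ) (hw : ∀ i, 0 < w i) (d : ℕ) :
    {e : Fin n → ℕ | ∑ i, w i * e i ≤ d} = ↑(MF n w d) := by
  ext e
  simp only [MF, Set.mem_setOf_eq, coe_filter, Fintype.mem_piFinset, mem_range,
    Set.mem_setOf_eq]
  constructor
  · intro h
    refine ⟨fun i => ?_, h⟩
    have h1 : w i * e i ≤ d :=
      le_trans (Finset.single_le_sum (f := fun i => w i * e i)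
        (fun _ _ => Nat.zero_le _) (mem_univ i)) h
    have h2 : e i ≤ w i * e i := Nat.le_mul_of_pos_left _ (hw i)
    omega
  · exact fun h => h.2

private lemma pow_step (a c : ℝ) (ha : 0 ≤ a) (hc : 0 ≤ c) (n : ℕ) :
    ((n : ℝ) + 1) * c * a ^ n ≤ (a + c) ^ (n + 1) - a ^ (n + 1) := by
  induction n with
  | zero => simp
  | succ n ih =>
    have hpow : (0:ℝ) ≤ a ^ n := pow_nonneg ha n
    have hn : (0:ℝ) ≤ (n:ℝ) := Nat.cast_nonneg n
    simp only [pow_succ] at ih ⊢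
    have hkey : ((n:ℝ) + 1) * c * a ^ n * (a + c) ≤
        ((a + c) ^ n * (a + c) - a ^ n * a) * (a + c) :=
      mul_le_mul_of_nonneg_right ih (by linarith)
    push_cast
    nlinarith [hkey, mul_nonneg (mul_nonneg hc hc) hpow,
      mul_nonneg (mul_nonneg (mul_nonneg hn hc) hc) hpow]

private lemma key : ∀ (n : ℕ) (w : Fin n → ℕ), (∀ i, 0 < w i) → ∀ d : ℕ,
    ((MF n w d).card : ℝ) * ((n.factorial : ℝ) * ∏ i, (w i : ℝ)) ≤
      ((d : ℝ) + ∑ i, (w i : ℝ)) ^ n := by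
  intro n
  induction n with
  | zero =>
    intro w hw d
    have : (MF 0 w d).card = 1 := by
      rw [MF, Finset.filter_true_of_mem (fun e _ => by simp)]
      rw [Fintype.card_piFinset]
      simp
    rw [this]
    simp
  | succ n ih =>
    intro w hw d
    set wl : ℕ := w (Fin.last n) with hwl
    set w' : Fin n → ℕ := fun i => w i.castSucc with hw'
    have hwlpos : 0 < wl := hw _
    have hw'pos : ∀ i, 0 < w' i := fun i => hw _
    set K : ℕ := d / wl with hK
    -- card recursion
    have hfiber : ∀ e ∈ MF (n+1) w d, e (Fin.last n) ∈ Finset.range (K + 1) := by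
      intro e he
      simp only [MF, Finset.mem_filter] at he
      rw [Finset.mem_range]
      have h1 : wl * e (Fin.last n) ≤ d :=
        le_trans (Finset.single_le_sum (f := fun i => w i * e i)
          (fun _ _ => Nat.zero_le _) (mem_univ (Fin.last n))) he.2
      have : e (Fin.last n) ≤ K := (Nat.le_div_iff_mul_le hwlpos).2 (by rwa [mul_comm])
      omega
    have hcard : (MF (n+1) w d).card =
        ∑ k ∈ Finset.range (K + 1), (MF n w' (d - wl * k)).card := by
      rw [Finset.card_eq_sum_card_fiberwise hfiber]
      refine Finset.sum_congr rfl fun k hk => ?_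
      rw [Finset.mem_range] at hk
      have hkK : k ≤ K := by omega
      have hwlk : wl * k ≤ d := le_trans (Nat.mul_le_mul_left wl hkK) (Nat.mul_div_le d wl)
      refine Finset.card_bij' (fun e _ => Fin.init e) (fun e' _ => Fin.snoc e' k)
        ?hi ?hj ?left ?right
      case hi =>
        intro e he
        simp only [Finset.mem_filter, MF, Fintype.mem_piFinset, Finset.mem_range] at he ⊢
        obtain ⟨⟨hmem, hsum⟩, hlast⟩ := he
        have hdec : ∑ i, w i * e i =
            (∑ i : Fin n, w' i * Fin.init e i) + wl * k := by
          rw [Fin.sum_univ_castSucc]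
          simp [hw', Fin.init, hlast, hwl]
        rw [hdec] at hsum
        have hs : ∑ i : Fin n, w' i * Fin.init e i ≤ d - wl * k := by omega
        refine ⟨fun i => ?_, hs⟩
        have h1 : w' i * Fin.init e i ≤ d - wl * k :=
          le_trans (Finset.single_le_sum (f := fun i => w' i * Fin.init e i)
            (fun _ _ => Nat.zero_le _) (mem_univ i)) hs
        have h2 : Fin.init e i ≤ w' i * Fin.init e i :=
          Nat.le_mul_of_pos_left _ (hw'pos i)
        omega
      case hj =>
        intro e' he'
        simp only [Finset.mem_filter, MF, Fintype.mem_piFinset, Finset.mem_range] at he' ⊢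
        obtain ⟨hmem, hsum⟩ := he'
        have hdec : ∑ i, w i * (Fin.snoc e' k : Fin (n+1) → ℕ) i =
            (∑ i : Fin n, w' i * e' i) + wl * k := by
          rw [Fin.sum_univ_castSucc]
          simp [hw', hwl]
        have hKd : K ≤ d := Nat.div_le_self d wl
        refine ⟨⟨?_, ?_⟩, ?_⟩
        · intro i
          refine Fin.lastCases (motive := fun i => (Fin.snoc e' k : Fin (n+1) → ℕ) i < d + 1) ?_ (fun j => ?_) i
          · simp only [Fin.snoc_last]; omega
          · simp only [Fin.snoc_castSucc]
            have := hmem j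
            omega
        · rw [hdec]; omega
        · simp
      case left =>
        intro e he
        simp only [Finset.mem_filter] at he
        have h := Fin.snoc_init_self e
        rw [he.2] at h
        exact h
      case right =>
        intro e' _
        simp
    -- real estimates
    set S' : ℝ := ∑ i : Fin n, (w' i : ℝ) with hS'
    have hS'0 : 0 ≤ S' := Finset.sum_nonneg fun i _ => by positivity
    have hwlR : (0:ℝ) < (wl : ℝ) := by exact_mod_cast hwlpos
    have hsumw : ∑ i : Fin (n+1), (w i : ℝ) = S' + wl := by
      rw [Fin.sum_univ_castSucc]
    have hprodw : ∏ i : Fin (n+1), (w i : ℝ) = (∏ i : Fin n, (w' i : ℝ)) * wl := by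
      rw [Fin.prod_univ_castSucc]
    set P' : ℝ := ∏ i : Fin n, (w' i : ℝ) with hP'
    have hP'0 : (0:ℝ) < P' := Finset.prod_pos fun i _ => by exact_mod_cast hw'pos i
    set b : ℕ → ℝ := fun k => ((d : ℝ) + S' + wl - wl * k) ^ (n + 1) with hb
    have main : ∀ k ∈ Finset.range (K + 1),
        ((MF n w' (d - wl * k)).card : ℝ) * (((n+1).factorial : ℝ) * (P' * wl)) ≤
          b k - b (k + 1) := by
      intro k hk
      rw [Finset.mem_range] at hk
      have hkK : k ≤ K := by omega
      have hwlk : wl * k ≤ d := le_trans (Nat.mul_le_mul_left wl hkK) (Nat.mul_div_le d wl)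
      have hcast : ((d - wl * k : ℕ) : ℝ) = (d : ℝ) - wl * k := by
        push_cast [Nat.cast_sub hwlk]; ring
      have hihk := ih w' hw'pos (d - wl * k)
      rw [hcast] at hihk
      set a : ℝ := (d : ℝ) - wl * k + S' with ha
      have ha0 : 0 ≤ a := by
        have : (wl * k : ℝ) ≤ d := by exact_mod_cast hwlk
        simp only [ha]; linarith
      have hihk' : ((MF n w' (d - wl * k)).card : ℝ) * ((n.factorial : ℝ) * P') ≤ a ^ n := by
        convert hihk using 2
      have hstep := pow_step a wl ha0 (le_of_lt hwlR) n
      have hb1 : b k = (a + wl) ^ (n + 1) := by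
        simp only [hb, ha]; push_cast; ring_nf
      have hb2 : b (k + 1) = a ^ (n + 1) := by
        simp only [hb, ha]; push_cast; ring_nf
      rw [hb1, hb2]
      have hfact : ((n+1).factorial : ℝ) = ((n:ℝ) + 1) * n.factorial := by
        rw [Nat.factorial_succ]; push_cast; ring
      rw [hfact]
      have hcardnn : (0:ℝ) ≤ ((MF n w' (d - wl * k)).card : ℝ) := Nat.cast_nonneg _
      calc ((MF n w' (d - wl * k)).card : ℝ) * (((n:ℝ) + 1) * n.factorial * (P' * wl))
          = (((MF n w' (d - wl * k)).card : ℝ) * ((n.factorial : ℝ) * P')) *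
            (((n:ℝ) + 1) * wl) := by ring
        _ ≤ a ^ n * (((n:ℝ) + 1) * wl) := by
            apply mul_le_mul_of_nonneg_right hihk' (by positivity)
        _ = ((n:ℝ) + 1) * wl * a ^ n := by ring
        _ ≤ (a + wl) ^ (n + 1) - a ^ (n + 1) := hstep
    have hsumle : ((MF (n+1) w d).card : ℝ) * (((n+1).factorial : ℝ) * (P' * wl)) ≤
        ∑ k ∈ Finset.range (K + 1), (b k - b (k + 1)) := by
      rw [hcard]
      push_cast
      rw [Finset.sum_mul]
      exact Finset.sum_le_sum main
    rw [Finset.sum_range_sub'] at hsumle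
    have hbK : 0 ≤ b (K + 1) := by
      have hwlK : wl * K ≤ d := Nat.mul_div_le d wl
      have hc : (wl * K : ℝ) ≤ d := by exact_mod_cast hwlK
      simp only [hb]
      have hbase : (0:ℝ) ≤ (d : ℝ) + S' + (wl:ℝ) - (wl:ℝ) * ((K + 1 : ℕ) : ℝ) := by
        push_cast at hc ⊢; linarith
      exact pow_nonneg hbase (n + 1)
    have hb0 : b 0 = ((d : ℝ) + S' + wl) ^ (n + 1) := by simp [hb]
    rw [hsumw, hprodw]
    calc ((MF (n+1) w d).card : ℝ) * (((n+1).factorial : ℝ) * (P' * wl))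
        ≤ b 0 - b (K + 1) := hsumle
      _ ≤ b 0 := by linarith
      _ = ((d : ℝ) + (S' + wl)) ^ (n + 1) := by rw [hb0]; ring_nf

/-- The number of monomials in `n` variables of weighted degree at most `d` (variable `xᵢ`
of positive weight `wᵢ`) is at most `(d + w₁ + ⋯ + wₙ)ⁿ / (n!·w₁⋯wₙ)`. -/
theorem stmt11 {n : ℕ} (w : Fin n → ℕ) (hw : ∀ i, 0 < w i) (d : ℕ) :
    (({e : Fin n → ℕ | ∑ i, w i * e i ≤ d}.ncard : ℝ)) ≤
      ((d : ℝ) + ∑ i, (w i : ℝ)) ^ n / ((n.factorial : ℝ) * ∏ i, (w i : ℝ)) := by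
  rw [set_eq_MF w hw d, Set.ncard_coe_finset]
  have hpos : (0:ℝ) < (n.factorial : ℝ) * ∏ i, (w i : ℝ) := by
    apply mul_pos
    · exact_mod_cast Nat.factorial_pos n
    · exact Finset.prod_pos fun i _ => by exact_mod_cast hw i
  rw [le_div_iff₀ hpos]
  exact key n w hw d
end
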